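/- arXiv:math/9210204 — 2 statements merged into one kernel-verified Lean document; each statement's English description precedes it below -/
import Mathlib

section
/- Let κ be a regular cardinal, S a set, A ⊆ κ cutting a family D ⊆ P(κ) (i.e. |A| = κ and no b ∈ D splits A), and f : κ → S a function such that f⁻¹(a) ∈ D for every a in a given family E ⊆ P(S), and such that |f⁻¹{s} ∩ A| < κ for all s ∈ S. Then for every a ∈ E: |a ∩ f''A| = κ if and only if |f⁻¹(a) ∩ A| = κ, if and only if |A \ f⁻¹(a)| < κ, if and only if |f''A \ a| < κ. Consequently A' = f''A cuts E, and the family F' = {a ∈ E : |a ∩ f''A| = κ} equals {a ∈ E : f⁻¹(a) ∈ F}, where F = {b ∈ D : |A ∩ b| = κ}. -/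
open Cardinal

universe u

/-- `A` cuts the family `S`: `A` has cardinality `κ` and no member of `S` splits `A`. -/
def CutsAt {α : Type u} (κ : Cardinal.{u}) (A : Set α) (S : Set (Set α)) : Prop :=
  #A = κ ∧ ∀ b ∈ S, #(A ∩ b : Set α) < κ ∨ #((A \ b : Set α)) < κ

/-- Auxiliary: if fibers of `f` are small on `A`, then subsets of `A` with small image
are small. -/
lemma small_of_image_small {α S : Type u} {f : α → S} {A T : Set α}
    (hreg : (#α).IsRegular)
    (hfib : ∀ s : S, #((f ⁻¹' {s} ∩ A : Set α)) < #α)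
    (hT : T ⊆ A) (h : #(f '' T : Set S) < #α) : #T < #α := by
  have hsub : T ⊆ ⋃ s ∈ (f '' T), (f ⁻¹' {s} ∩ A) := by
    intro x hx
    exact Set.mem_biUnion ⟨x, hx, rfl⟩ ⟨rfl, hT hx⟩
  refine lt_of_le_of_lt (Cardinal.mk_le_mk_of_subset hsub) ?_
  rw [Cardinal.card_biUnion_lt_iff_forall_of_isRegular hreg h]
  exact fun s _ => hfib s

/-- Auxiliary: under the small-fiber condition, a subset of `A` is large iff its image is. -/
lemma image_large_iff {α S : Type u} {f : α → S} {A T : Set α}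
    (hreg : (#α).IsRegular)
    (hfib : ∀ s : S, #((f ⁻¹' {s} ∩ A : Set α)) < #α)
    (hAcard : #A = #α) (hT : T ⊆ A) :
    #(f '' T : Set S) = #α ↔ #T = #α := by
  have hTle : #T ≤ #α := hAcard ▸ Cardinal.mk_le_mk_of_subset hT
  have hIle : #(f '' T : Set S) ≤ #T := Cardinal.mk_image_le
  constructor
  · intro h
    exact le_antisymm hTle (h ▸ hIle)
  · intro h
    by_contra hne
    have : #(f '' T : Set S) < #α := lt_of_le_of_ne (hIle.trans hTle) hne
    exact absurd (small_of_image_small hreg hfib hT this) (h ▸ lt_irrefl _)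

/-- Lemma 3 of the paper: pushing a cutting set forward along a function
with small fibers on `A` yields a cutting set for the pulled-back family, and the induced
ultrafilter-like system is the pushforward of the original one. -/
theorem pushforward_cutting (α S : Type u)
    (hreg : (#α).IsRegular) (hunc : Cardinal.aleph0 < #α)
    (D : Set (Set α)) (A : Set α) (hA : CutsAt #α A D)
    (E : Set (Set S)) (f : α → S)
    (hpre : ∀ a ∈ E, f ⁻¹' a ∈ D)
    (hfib : ∀ s : S, #((f ⁻¹' {s} ∩ A : Set α)) < #α) :
    (∀ a ∈ E,
        (#((a ∩ f '' A : Set S)) = #α ↔ #((f ⁻¹' a ∩ A : Set α)) = #α) ∧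
        (#((f ⁻¹' a ∩ A : Set α)) = #α ↔ #((A \ f ⁻¹' a : Set α)) < #α) ∧
        (#((A \ f ⁻¹' a : Set α)) < #α ↔ #((f '' A \ a : Set S)) < #α)) ∧
      CutsAt #α (f '' A) E ∧
      {a ∈ E | #((a ∩ f '' A : Set S)) = #α} =
        {a ∈ E | f ⁻¹' a ∈ {b ∈ D | #((A ∩ b : Set α)) = #α}} := by
  obtain ⟨hAcard, hAcut⟩ := hA
  -- basic image identities
  have him1 : ∀ a : Set S, f '' (f ⁻¹' a ∩ A) = a ∩ f '' A := by
    intro a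
    ext s
    constructor
    · rintro ⟨x, ⟨hxa, hxA⟩, rfl⟩
      exact ⟨hxa, x, hxA, rfl⟩
    · rintro ⟨hs, x, hxA, rfl⟩
      exact ⟨x, ⟨hs, hxA⟩, rfl⟩
  have him2 : ∀ a : Set S, f '' (A \ f ⁻¹' a) = f '' A \ a := by
    intro a
    ext s
    constructor
    · rintro ⟨x, ⟨hxA, hxa⟩, rfl⟩
      exact ⟨⟨x, hxA, rfl⟩, hxa⟩
    · rintro ⟨⟨x, hxA, rfl⟩, hs⟩
      exact ⟨x, ⟨hxA, hs⟩, rfl⟩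
  -- dichotomy on A, valid for members of D
  have hdich : ∀ b ∈ D, (#((A ∩ b : Set α)) = #α ↔ #((A \ b : Set α)) < #α) := by
    intro b hb
    constructor
    · intro h
      rcases hAcut b hb with h1 | h1
      · exact absurd h (h1.ne)
      · exact h1
    · intro h
      have hunion : A ⊆ (A ∩ b) ∪ (A \ b) := by
        intro x hx
        by_cases hxb : x ∈ b
        · exact Or.inl ⟨hx, hxb⟩
        · exact Or.inr ⟨hx, hxb⟩
      by_contra hne
      have h1 : #((A ∩ b : Set α)) < #α :=
        lt_of_le_of_ne (hAcard ▸ Cardinal.mk_le_mk_of_subset Set.inter_subset_left) hne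
      have hle : #A ≤ #(((A ∩ b) ∪ (A \ b) : Set α)) :=
        Cardinal.mk_le_mk_of_subset hunion
      have hlt : #(((A ∩ b) ∪ (A \ b) : Set α)) < #α :=
        lt_of_le_of_lt (Cardinal.mk_union_le _ _)
          (Cardinal.add_lt_of_lt hreg.aleph0_le h1 h)
      exact absurd (hAcard ▸ lt_of_le_of_lt hle hlt) (lt_irrefl _)
  -- the three equivalences for a ∈ E
  have hmain : ∀ a ∈ E,
      (#((a ∩ f '' A : Set S)) = #α ↔ #((f ⁻¹' a ∩ A : Set α)) = #α) ∧
      (#((f ⁻¹' a ∩ A : Set α)) = #α ↔ #((A \ f ⁻¹' a : Set α)) < #α) ∧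
      (#((A \ f ⁻¹' a : Set α)) < #α ↔ #((f '' A \ a : Set S)) < #α) := by
    intro a ha
    have hb : f ⁻¹' a ∈ D := hpre a ha
    have e1 : #((a ∩ f '' A : Set S)) = #α ↔ #((f ⁻¹' a ∩ A : Set α)) = #α := by
      rw [← him1 a]
      exact image_large_iff hreg hfib hAcard Set.inter_subset_right
    have e2 : #((f ⁻¹' a ∩ A : Set α)) = #α ↔ #((A \ f ⁻¹' a : Set α)) < #α := by
      rw [Set.inter_comm]
      exact hdich _ hb
    have e3 : #((A \ f ⁻¹' a : Set α)) < #α ↔ #((f '' A \ a : Set S)) < #α := by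
      constructor
      · intro h
        rw [← him2 a]
        exact lt_of_le_of_lt Cardinal.mk_image_le h
      · intro h
        rw [← him2 a] at h
        exact small_of_image_small hreg hfib Set.diff_subset h
    exact ⟨e1, e2, e3⟩
  refine ⟨hmain, ⟨?_, ?_⟩, ?_⟩
  · -- #(f '' A) = #α
    exact (image_large_iff hreg hfib hAcard (subset_refl A)).mpr hAcard
  · -- cutting property for E
    intro a ha
    obtain ⟨e1, e2, e3⟩ := hmain a ha
    rcases hAcut (f ⁻¹' a) (hpre a ha) with h | h
    · left
      by_contra hne
      push_neg at hne
      have hle : #((f '' A ∩ a : Set S)) ≤ #α := by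
        have := Cardinal.mk_le_mk_of_subset (Set.inter_subset_left : f '' A ∩ a ⊆ f '' A)
        exact this.trans ((image_large_iff hreg hfib hAcard (subset_refl A)).mpr hAcard).le
      have heq : #((a ∩ f '' A : Set S)) = #α := by
        rw [Set.inter_comm]; exact le_antisymm hle hne
      have := e1.mp heq
      rw [Set.inter_comm] at this
      exact absurd this h.ne
    · right
      exact e3.mp h
  · -- set equality
    ext a
    simp only [Set.mem_setOf_eq, Set.mem_sep_iff]
    constructor
    · rintro ⟨ha, hcard⟩
      obtain ⟨e1, e2, e3⟩ := hmain a ha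
      refine ⟨ha, hpre a ha, ?_⟩
      rw [Set.inter_comm]
      exact e1.mp hcard
    · rintro ⟨ha, _, hcard⟩
      obtain ⟨e1, e2, e3⟩ := hmain a ha
      rw [Set.inter_comm] at hcard
      exact ⟨ha, e1.mpr hcard⟩
end

section
/- Let κ be a regular uncountable cardinal with splitting number s(κ) ≥ κ⁺⁺, and let M be an inner model (or transitive set model of enough ZFC containing κ+1) satisfying GCH with |P(κ) ∩ M| ≤ κ⁺. Then P(κ) ∩ M is not a splitting family on κ, so there exists A ⊆ κ with |A| = κ such that F = {b ∈ P(κ) ∩ M : |A ∩ b| = κ} is a weakly κ-complete M-ultrafilter on κ: for every b ∈ P(κ) ∩ M either b ∈ F or κ \ b ∈ F, and F is closed under intersections of fewer than κ members (all intersections being nonempty). -/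
open Cardinal

universe u

/-- `b` splits `A`: both `A ∩ b` and `A \ b` have full cardinality `κ`. -/
def Splits {α : Type u} (κ : Cardinal.{u}) (b A : Set α) : Prop :=
  #(A ∩ b : Set α) = κ ∧ #((A \ b : Set α)) = κ

/-- The splitting number `s(κ)` of a type `α` of cardinality `κ`. -/
noncomputable def splittingNumber (α : Type u) : Cardinal.{u} :=
  sInf { c | ∃ S : Set (Set α), #S = c ∧
    ∀ A : Set α, #A = #α → ∃ b ∈ S, Splits #α b A }

/-- If `A` has full regular cardinality and `A \ X` is small, then `A ∩ X` is full. -/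
lemma full_of_diff_small {α : Type u} (hκ : Cardinal.aleph0 ≤ #α) (A X : Set α)
    (hA : #A = #α) (h : #((A \ X : Set α)) < #α) : #((A ∩ X : Set α)) = #α := by
  have hle : #((A ∩ X : Set α)) ≤ #α :=
    hA ▸ Cardinal.mk_le_mk_of_subset Set.inter_subset_left
  rcases hle.lt_or_eq with hlt | he
  · exfalso
    have hsub : A ⊆ (A ∩ X) ∪ (A \ X) := by
      intro x hx
      by_cases hxX : x ∈ X
      · exact Or.inl ⟨hx, hxX⟩
      · exact Or.inr ⟨hx, hxX⟩
    have h1 : #A ≤ #((A ∩ X : Set α)) + #((A \ X : Set α)) :=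
      (Cardinal.mk_le_mk_of_subset hsub).trans (Cardinal.mk_union_le _ _)
    have h2 : #((A ∩ X : Set α)) + #((A \ X : Set α)) < #α :=
      Cardinal.add_lt_of_lt hκ hlt h
    exact absurd (hA ▸ h1) (not_le.mpr h2)
  · exact he

/-- if `s(κ) ≥ κ⁺⁺` and `D = 𝒫(κ) ∩ M` (a transitive-model-style family,
closed under complements and `<κ`-intersections, of size at most `κ⁺`), then `D` is not
splitting and the system `F` induced by a cutting set `A` is a weakly `κ`-complete
`M`-ultrafilter: it decides every member of `D` and is closed under `<κ`-intersections,
all of which are nonempty. -/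
theorem model_powerset_not_splitting (α : Type u)
    (hreg : (#α).IsRegular) (hunc : Cardinal.aleph0 < #α)
    (hsplit : Order.succ (Order.succ #α) ≤ splittingNumber α)
    (D : Set (Set α))
    (hcompl : ∀ b ∈ D, bᶜ ∈ D)
    (hinter : ∀ (ι : Type u) (b : ι → Set α), #ι < #α → (∀ i, b i ∈ D) → (⋂ i, b i) ∈ D)
    (hcard : #D ≤ Order.succ #α) :
    (¬ ∀ A : Set α, #A = #α → ∃ b ∈ D, Splits #α b A) ∧
    ∃ A : Set α, #A = #α ∧
      (∀ b ∈ D, #((A ∩ b : Set α)) < #α ∨ #((A \ b : Set α)) < #α) ∧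
      (∀ b ∈ D, b ∈ {b ∈ D | #((A ∩ b : Set α)) = #α} ∨
        bᶜ ∈ {b ∈ D | #((A ∩ b : Set α)) = #α}) ∧
      (∀ (ι : Type u) (b : ι → Set α), #ι < #α →
        (∀ i, b i ∈ {b ∈ D | #((A ∩ b : Set α)) = #α}) →
          (⋂ i, b i) ∈ {b ∈ D | #((A ∩ b : Set α)) = #α} ∧ (⋂ i, b i).Nonempty) := by
  have hκ0 : Cardinal.aleph0 ≤ #α := hunc.le
  have hns : ¬ ∀ A : Set α, #A = #α → ∃ b ∈ D, Splits #α b A := by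
    intro h
    have h1 : splittingNumber α ≤ #D := csInf_le' ⟨D, rfl, h⟩
    have h2 : Order.succ (Order.succ #α) ≤ Order.succ #α :=
      hsplit.trans (h1.trans hcard)
    exact absurd h2 (not_le.mpr (Order.lt_succ _))
  refine ⟨hns, ?_⟩
  push_neg at hns
  obtain ⟨A, hA, hAns⟩ := hns
  -- dichotomy
  have hdich : ∀ b ∈ D, #((A ∩ b : Set α)) < #α ∨ #((A \ b : Set α)) < #α := by
    intro b hb
    have hns := hAns b hb
    rw [Splits, not_and_or] at hns
    have h1 : #((A ∩ b : Set α)) ≤ #α :=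
      hA ▸ Cardinal.mk_le_mk_of_subset Set.inter_subset_left
    have h2 : #((A \ b : Set α)) ≤ #α :=
      hA ▸ Cardinal.mk_le_mk_of_subset Set.diff_subset
    rcases hns with h | h
    · exact Or.inl (h1.lt_of_ne h)
    · exact Or.inr (h2.lt_of_ne h)
  refine ⟨A, hA, hdich, ?_, ?_⟩
  · -- ultrafilter decision
    intro b hb
    rcases hdich b hb with h | h
    · right
      refine ⟨hcompl b hb, ?_⟩
      have hdc : #((A \ bᶜ : Set α)) < #α := by
        rwa [Set.diff_compl]
      exact full_of_diff_small hκ0 A bᶜ hA hdc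
    · left
      exact ⟨hb, full_of_diff_small hκ0 A b hA h⟩
  · -- <κ-completeness
    intro ι b hι hmem
    have hD : ∀ i, b i ∈ D := fun i => (hmem i).1
    have hsmall : ∀ i, #((A \ b i : Set α)) < #α := by
      intro i
      rcases hdich (b i) (hD i) with h | h
      · exact absurd (hmem i).2 h.ne
      · exact h
    have hdiff : #((A \ ⋂ i, b i : Set α)) < #α := by
      rw [Set.diff_iInter]
      exact (Cardinal.card_iUnion_lt_iff_forall_of_isRegular hreg hι).mpr hsmall
    have hfull : #((A ∩ ⋂ i, b i : Set α)) = #α :=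
      full_of_diff_small hκ0 A _ hA hdiff
    have hne : (A ∩ ⋂ i, b i).Nonempty := by
      rw [← Set.nonempty_coe_sort, ← Cardinal.mk_ne_zero_iff, hfull]
      exact hreg.pos.ne'
    exact ⟨⟨hinter ι b hι hD, hfull⟩, hne.mono Set.inter_subset_right⟩
end
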